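/- If Θ̂ maximizes Θ ↦ log det Θ − tr(ΘS) − ρ Σ_{h,k} |θ_{hk}| over positive definite symmetric matrices, where S is positive semidefinite with positive diagonal and ρ > 0, then the diagonal of Θ̂^{-1} satisfies (Θ̂^{-1})_{hh} = s_{hh} + ρ for all h, and consequently tr(Θ̂^{-1}) = tr(S) + pρ. -/

import Mathlib

/-!
Perturb only the `(h, h)` entry: `Θ̂ + t E_hh` stays symmetric positive definite for `t` near `0`
(writing `y = Θ̂⁻¹ e_h`, the form of `Θ̂ - E_hh / (Θ̂⁻¹)_hh` at `x` is that of `Θ̂` at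
`x - (x_h / (Θ̂⁻¹)_hh) y`), `det (Θ̂ + t E_hh) = det Θ̂ + t adj(Θ̂)_hh`, and since `θ̂_hh > 0` the
penalty grows by exactly `ρ t`. Along this line the objective is thus
`log (det Θ̂ + t adj(Θ̂)_hh) - t (s_hh + ρ) + const`, which is differentiable and maximal at
`t = 0`, so its derivative `(Θ̂⁻¹)_hh - s_hh - ρ` vanishes.
-/

namespace Matrix

variable {n : Type*} [Fintype n] [DecidableEq n]

theorem det_add_single_self {R : Type*} [CommRing R] (A : Matrix n n R) (i : n) (t : R) :
    (A + single i i t).det = A.det + t * A.adjugate i i := by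
  have hrow : A + single i i t = A.updateRow i (A i + t • Pi.single i 1) := by
    ext j k
    rcases eq_or_ne j i with rfl | hj
    · simp [single, Pi.single_apply, eq_comm]
    · simp [single, hj, Ne.symm hj]
  rw [hrow, det_updateRow_add, updateRow_eq_self, det_updateRow_smul, ← adjugate_apply]

theorem trace_add_single_self_mul {R : Type*} [CommRing R] (A S : Matrix n n R) (i : n) (t : R) :
    ((A + single i i t) * S).trace = (A * S).trace + t * S i i := by
  rw [add_mul, trace_add, trace_single_mul, smul_eq_mul]

theorem sum_abs_add_single_self {A : Matrix n n ℝ} {i : n} {t : ℝ} (hA : 0 ≤ A i i)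
    (ht : 0 ≤ A i i + t) :
    ∑ j, ∑ k, |(A + single i i t) j k| = ∑ j, ∑ k, |A j k| + t := by
  have hentry : ∀ j k, |(A + single i i t) j k| = |A j k| + single i i t j k := by
    intro j k
    by_cases hjk : j = i ∧ k = i
    · obtain ⟨rfl, rfl⟩ := hjk
      simp [abs_of_nonneg hA, abs_of_nonneg ht]
    · have hji : ¬(i = j ∧ i = k) := fun h => hjk ⟨h.1.symm, h.2.symm⟩
      simp [single, hji]
  simp only [hentry, Finset.sum_add_distrib]
  simp [single, ite_and]

theorem PosDef.posSemidef_sub_single_inv {A : Matrix n n ℝ} (hA : A.PosDef) (i : n) :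
    (A - single i i (A⁻¹ i i)⁻¹).PosSemidef := by
  set b := A⁻¹ i i
  have hb : 0 < b := hA.inv.diag_pos
  set y := A⁻¹ *ᵥ Pi.single i 1
  have hAy : A *ᵥ y = Pi.single i 1 := by
    rw [mulVec_mulVec, mul_nonsing_inv _ (isUnit_iff_isUnit_det _ |>.mp hA.isUnit), one_mulVec]
  have hyA : y ᵥ* A = Pi.single i 1 := by
    rw [← mulVec_transpose, ← conjTranspose_eq_transpose_of_trivial, hA.isHermitian.eq, hAy]
  have hyi : y i = b := by simp [y, b]
  refine posSemidef_iff_dotProduct_mulVec.2 ⟨hA.isHermitian.sub ?_, fun x => ?_⟩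
  · rw [← diagonal_single]; exact isHermitian_diagonal _
  · have hquad : star x ⬝ᵥ (A - single i i b⁻¹) *ᵥ x
        = star (x - (x i / b) • y) ⬝ᵥ A *ᵥ (x - (x i / b) • y) := by
      simp only [star_trivial, sub_mulVec, mulVec_sub, mulVec_smul, dotProduct_sub, sub_dotProduct,
        dotProduct_smul, smul_dotProduct, hAy, dotProduct_mulVec y, hyA, dotProduct_single,
        single_dotProduct, single_mulVec_eq, Pi.sub_apply, Pi.smul_apply, smul_eq_mul, hyi]
      field_simp
      ring
    rw [hquad]
    exact hA.posSemidef.dotProduct_mulVec_nonneg _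

theorem PosDef.add_single_self {A : Matrix n n ℝ} (hA : A.PosDef) {i : n} {t : ℝ}
    (ht : -(A⁻¹ i i)⁻¹ < t) : (A + single i i t).PosDef := by
  have hb : 0 < A⁻¹ i i := hA.inv.diag_pos
  rcases le_or_gt 0 t with ht0 | ht0
  · refine hA.add_posSemidef ?_
    rw [← diagonal_single]
    exact PosSemidef.diagonal (Pi.single_nonneg.2 ht0)
  · have hconv : A + single i i t
        = (1 + t * A⁻¹ i i) • A + (-(t * A⁻¹ i i)) • (A - single i i (A⁻¹ i i)⁻¹) := by
      have hcoef : -(t * A⁻¹ i i) * (A⁻¹ i i)⁻¹ = -t := by field_simp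
      rw [smul_sub, smul_single, smul_eq_mul, hcoef, ← single_neg]
      module
    have hpos : 0 < 1 + t * A⁻¹ i i := by
      have := mul_lt_mul_of_pos_right ht hb
      rw [neg_mul, inv_mul_cancel₀ hb.ne'] at this
      linarith
    rw [hconv]
    exact (hA.smul hpos).add_posSemidef
      ((hA.posSemidef_sub_single_inv i).smul (by nlinarith))

theorem hasDerivAt_log_det_add_single {A : Matrix n n ℝ} (hA : A.det ≠ 0) (i : n) :
    HasDerivAt (fun t => Real.log (A + single i i t).det) (A⁻¹ i i) 0 := by
  simp only [det_add_single_self]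
  have := (((hasDerivAt_id (0 : ℝ)).mul_const (A.adjugate i i)).const_add A.det).log
    (by simpa using hA)
  refine this.congr_deriv ?_
  rw [inv_def, Ring.inverse_eq_inv']
  simp [div_eq_inv_mul]

end Matrix

open Matrix

theorem glasso_diagonal_of_maximizer_general (p : ℕ) (S : Matrix (Fin p) (Fin p) ℝ) (ρ : ℝ)
    (Θhat : Matrix (Fin p) (Fin p) ℝ)
    (hΘhat : Θhat ∈ {Θ : Matrix (Fin p) (Fin p) ℝ | Θ.PosDef ∧ Θ.IsSymm})
    (hmax : IsMaxOn (fun Θ : Matrix (Fin p) (Fin p) ℝ =>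
        Real.log Θ.det - (Θ * S).trace - ρ * ∑ h, ∑ k, |Θ h k|)
      {Θ : Matrix (Fin p) (Fin p) ℝ | Θ.PosDef ∧ Θ.IsSymm} Θhat) :
    (∀ h, Θhat⁻¹ h h = S h h + ρ) ∧ Θhat⁻¹.trace = S.trace + p * ρ := by
  obtain ⟨hpd, hsymm⟩ := hΘhat
  have hinv_diag : ∀ h, Θhat⁻¹ h h = S h h + ρ := by
    intro h
    have hneg : -(Θhat⁻¹ h h)⁻¹ < 0 := neg_neg_of_pos (inv_pos.2 hpd.inv.diag_pos)
    have hfeasible : ∀ᶠ t in nhds 0, Θhat + single h h t ∈ {Θ | Θ.PosDef ∧ Θ.IsSymm} := by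
      filter_upwards [Ioi_mem_nhds hneg] with t ht
      exact ⟨hpd.add_single_self ht, hsymm.add (by rw [IsSymm, transpose_single])⟩
    set φ : ℝ → ℝ := fun t => Real.log (Θhat + single h h t).det
      - ((Θhat * S).trace + t * S h h) - ρ * (∑ j, ∑ k, |Θhat j k| + t) with hφ
    have hline : ∀ᶠ t in nhds 0, φ t = Real.log (Θhat + single h h t).det
        - ((Θhat + single h h t) * S).trace - ρ * ∑ j, ∑ k, |(Θhat + single h h t) j k| := by
      filter_upwards [Ioi_mem_nhds (neg_neg_of_pos hpd.diag_pos)] with t ht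
      rw [hφ, trace_add_single_self_mul,
        sum_abs_add_single_self hpd.diag_pos.le (by linarith [Set.mem_Ioi.1 ht])]
    have hloc : IsLocalMax φ 0 := by
      filter_upwards [hfeasible, hline] with t ht hφt
      rw [hφt]
      exact (hmax ht).trans_eq (by simp [hφ])
    have hderiv : HasDerivAt φ (Θhat⁻¹ h h - S h h - ρ) 0 := by
      have := ((hasDerivAt_log_det_add_single hpd.det_pos.ne' h).sub
        (((hasDerivAt_id (0 : ℝ)).mul_const (S h h)).const_add (Θhat * S).trace)).sub
        (((hasDerivAt_id (0 : ℝ)).const_add (∑ j, ∑ k, |Θhat j k|)).const_mul ρ)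
      exact this.congr_deriv (by ring)
    linarith [hloc.hasDerivAt_eq_zero hderiv]
  refine ⟨hinv_diag, ?_⟩
  simp [trace, hinv_diag, Finset.sum_add_distrib, mul_comm]

/-- if `Θ̂` maximizes `log det Θ - tr(ΘS) - ρ Σ_{h,k}|θ_{hk}|` (penalty on
all entries) over symmetric positive definite matrices, with `S` positive semidefinite
with positive diagonal and `ρ > 0`, then `(Θ̂⁻¹)_{hh} = s_{hh} + ρ` for all `h`, and
`tr(Θ̂⁻¹) = tr(S) + pρ`. -/
theorem glasso_diagonal_of_maximizer (p : ℕ) (S : Matrix (Fin p) (Fin p) ℝ)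
    (hS : S.PosSemidef) (hdiag : ∀ h, 0 < S h h) (ρ : ℝ) (hρ : 0 < ρ)
    (Θhat : Matrix (Fin p) (Fin p) ℝ)
    (hΘhat : Θhat ∈ {Θ : Matrix (Fin p) (Fin p) ℝ | Θ.PosDef ∧ Θ.IsSymm})
    (hmax : IsMaxOn (fun Θ : Matrix (Fin p) (Fin p) ℝ =>
        Real.log Θ.det - (Θ * S).trace - ρ * ∑ h, ∑ k, |Θ h k|)
      {Θ : Matrix (Fin p) (Fin p) ℝ | Θ.PosDef ∧ Θ.IsSymm} Θhat) :
    (∀ h, Θhat⁻¹ h h = S h h + ρ) ∧ Θhat⁻¹.trace = S.trace + p * ρ :=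
  glasso_diagonal_of_maximizer_general p S ρ Θhat hΘhat hmax
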